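/- Fix an integer g ≥ 1 and let I_i, V_i be positive real numbers for i ∈ {1,…,g+1} (indices cyclic modulo g+1) with Π_{k=1}^{g+1} V_k < Π_{k=1}^{g+1} I_k. Define I'_i = V_i + I_i·(1 − Π_{k=1}^{g+1} (V_k/I_k)) / (1 + Σ_{j=1}^{g} Π_{k=1}^{j} (V_{i−k}/I_{i−k})) and V'_i = I_{i+1}·V_i / I'_i. Then I'_i > 0 and V'_i > 0 for all i, and the discrete periodic Toda relations hold: I'_i = I_i + V_i − V'_{i−1} for all i. -/

import Mathlib

/-!
Write `r = V / I`, `P = ∏ r` and `D i = 1 + ∑_{j=1}^{g} ∏_{k=1}^{j} r (i - k)`, so that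
`I' i = V i + I i (1 - P) / D i`. Peeling the first factor off each product gives the cyclic
identity `r (i - 1) D (i - 1) + 1 = D i + P`, which simplifies `I' (i - 1)` to
`I (i - 1) D i / D (i - 1)`; with it the Toda relation becomes a rational identity.
Positivity only needs `D i ≥ 1` and `0 < P < 1`.
-/

open Finset

theorem Finset.prod_Icc_one_eq_prod_range {M : Type*} [CommMonoid M] (f : ℕ → M) (j : ℕ) :
    ∏ k ∈ Icc 1 j, f k = ∏ k ∈ range j, f (k + 1) := by
  rw [← Ico_add_one_right_eq_Icc, prod_Ico_eq_prod_range]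
  simp [add_comm]

theorem Finset.sum_Icc_one_eq_sum_range {M : Type*} [AddCommMonoid M] (f : ℕ → M) (j : ℕ) :
    ∑ k ∈ Icc 1 j, f k = ∑ k ∈ range j, f (k + 1) := by
  rw [← Ico_add_one_right_eq_Icc, sum_Ico_eq_sum_range]
  simp [add_comm]

namespace Fin

theorem ofNat_add_one (n k : ℕ) : Fin.ofNat (n + 1) (k + 1) = Fin.ofNat (n + 1) k + 1 := by
  ext
  simp [val_add, Nat.add_mod]

theorem prod_range_sub_ofNat_add_one {M : Type*} [CommMonoid M] {n : ℕ} (r : Fin (n + 1) → M)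
    (i : Fin (n + 1)) :
    ∏ k ∈ range (n + 1), r (i - Fin.ofNat (n + 1) (k + 1)) = ∏ k, r k := by
  rw [← prod_univ_eq_prod_range]
  simp only [ofNat_add_one, ofNat_val_eq_self]
  exact Fintype.prod_equiv ((Equiv.addRight 1).trans (Equiv.subLeft i)) _ _ fun _ => rfl

end Fin

section PrecedingProdSum

variable {R : Type*} {n : ℕ}

def precedingProdSum [CommSemiring R] (r : Fin (n + 1) → R) (i : Fin (n + 1)) : R :=
  1 + ∑ j ∈ Icc 1 n, ∏ k ∈ Icc 1 j, r (i - Fin.ofNat (n + 1) k)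

theorem precedingProdSum_eq_sum_range [CommSemiring R] (r : Fin (n + 1) → R) (i : Fin (n + 1)) :
    precedingProdSum r i =
      ∑ j ∈ range (n + 1), ∏ k ∈ range j, r (i - Fin.ofNat (n + 1) (k + 1)) := by
  rw [precedingProdSum, sum_Icc_one_eq_sum_range, sum_range_succ', prod_range_zero, add_comm]
  simp only [prod_Icc_one_eq_prod_range]

theorem one_le_precedingProdSum [CommSemiring R] [PartialOrder R] [IsOrderedRing R]
    {r : Fin (n + 1) → R} (hr : ∀ k, 0 ≤ r k) (i : Fin (n + 1)) :
    1 ≤ precedingProdSum r i :=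
  le_add_of_nonneg_right (sum_nonneg fun _ _ => prod_nonneg fun _ _ => hr _)

/-- Multiplying by `r (i - 1)` shifts every product one step further back; the term that falls off
the top of the sum is the full cyclic product. -/
theorem mul_precedingProdSum_sub_one_add_one [CommSemiring R] (r : Fin (n + 1) → R)
    (i : Fin (n + 1)) :
    r (i - 1) * precedingProdSum r (i - 1) + 1 = precedingProdSum r i + ∏ k, r k := by
  set f : ℕ → R := fun j => ∏ k ∈ range j, r (i - Fin.ofNat (n + 1) (k + 1))
  have hshift (j : ℕ) :
      r (i - 1) * ∏ k ∈ range j, r (i - 1 - Fin.ofNat (n + 1) (k + 1)) = f (j + 1) := by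
    rw [show f (j + 1) = _ from prod_range_succ' _ j, mul_comm]
    simp only [Fin.ofNat_add_one, sub_add_eq_sub_sub_swap]
    simp
  rw [precedingProdSum_eq_sum_range, precedingProdSum_eq_sum_range, mul_sum]
  simp only [hshift]
  have hf0 : f 0 = 1 := prod_range_zero _
  rw [← hf0, ← sum_range_succ', sum_range_succ]
  exact congrArg (_ + ·) (Fin.prod_range_sub_ofNat_add_one r i)

end PrecedingProdSum

section TodaAlgebra

variable {K : Type*} [Field K] {I₀ V₀ I₁ V₁ D₀ D₁ P : K}

theorem add_mul_div_eq_of_div_mul_add_one_eq (hI₀ : I₀ ≠ 0) (hD₀ : D₀ ≠ 0)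
    (h : V₀ / I₀ * D₀ + 1 = D₁ + P) :
    V₀ + I₀ * ((1 - P) / D₀) = I₀ * D₁ / D₀ := by
  field_simp at h ⊢
  linear_combination h

theorem toda_relation_of_div_mul_add_one_eq (hI₀ : I₀ ≠ 0) (hD₀ : D₀ ≠ 0) (hD₁ : D₁ ≠ 0)
    (h : V₀ / I₀ * D₀ + 1 = D₁ + P) :
    V₁ + I₁ * ((1 - P) / D₁) = I₁ + V₁ - I₁ * V₀ / (V₀ + I₀ * ((1 - P) / D₀)) := by
  rw [add_mul_div_eq_of_div_mul_add_one_eq hI₀ hD₀ h]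
  field_simp at h ⊢
  linear_combination I₁ * h

end TodaAlgebra

theorem dToda_explicit_solution (g : ℕ) (I V I' V' : Fin (g + 1) → ℝ)
    (hI : ∀ i, 0 < I i) (hV : ∀ i, 0 < V i)
    (hprod : (∏ k : Fin (g + 1), V k) < ∏ k : Fin (g + 1), I k)
    (hI' : ∀ i : Fin (g + 1), I' i =
      V i + I i * ((1 - ∏ k : Fin (g + 1), V k / I k) /
        (1 + ∑ j ∈ Finset.Icc 1 g, ∏ k ∈ Finset.Icc 1 j,
          V (i - Fin.ofNat (g + 1) k) / I (i - Fin.ofNat (g + 1) k))))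
    (hV' : ∀ i : Fin (g + 1), V' i = I (i + 1) * V i / I' i) :
    (∀ i, 0 < I' i) ∧ (∀ i, 0 < V' i) ∧
    ∀ i : Fin (g + 1), I' i = I i + V i - V' (i - 1) := by
  set r : Fin (g + 1) → ℝ := fun k => V k / I k
  have hr : ∀ k, 0 < r k := fun k => div_pos (hV k) (hI k)
  have hP : ∏ k, r k < 1 := by
    rwa [prod_div_distrib, div_lt_one (prod_pos fun k _ => hI k)]
  have hD : ∀ i, 0 < precedingProdSum r i := fun i =>
    zero_lt_one.trans_le (one_le_precedingProdSum (fun k => (hr k).le) i)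
  replace hI' : ∀ i, I' i = V i + I i * ((1 - ∏ k, r k) / precedingProdSum r i) := hI'
  have hI'_pos : ∀ i, 0 < I' i := fun i => by
    rw [hI']
    exact add_pos (hV i) (mul_pos (hI i) (div_pos (sub_pos.mpr hP) (hD i)))
  refine ⟨hI'_pos, fun i => ?_, fun i => ?_⟩
  · rw [hV']
    exact div_pos (mul_pos (hI _) (hV i)) (hI'_pos i)
  · rw [hV', sub_add_cancel, hI', hI']
    exact toda_relation_of_div_mul_add_one_eq (hI _).ne' (hD _).ne' (hD i).ne'
      (mul_precedingProdSum_sub_one_add_one r i)
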